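/- Let ρ > 0 and δ ∈ (0,1). The conversion ε(ρ, δ) = ρ + 2√(ρ log(1/δ)) from ρ-zCDP to (ε,δ)-DP is conservative relative to the exact Gaussian guarantee: a Gaussian mechanism satisfying ρ-zCDP is μ-GDP with μ = √(2ρ), and the exact δ at level ε(ρ,δ), namely Φ(−ε/μ + μ/2) − e^ε Φ(−ε/μ − μ/2) evaluated at ε = ρ + 2√(ρ log(1/δ)), is at most δ. -/

import Mathlib

open MeasureTheory ProbabilityTheory Real Set

/-- Standard normal CDF. -/
noncomputable def Phi (x : ℝ) : ℝ := ((gaussianReal 0 1) (Set.Iic x)).toReal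

/-- Inverse of the standard normal CDF (on (0,1)). -/
noncomputable def PhiInv (p : ℝ) : ℝ := sInf {x : ℝ | p ≤ Phi x}

/-- Gaussian tradeoff function `G_μ`, extended by `G_μ(0)=1`, `G_μ(1)=0`. -/
noncomputable def Gmu (μ α : ℝ) : ℝ :=
  if α ≤ 0 then 1 else if 1 ≤ α then 0 else Phi (PhiInv (1 - α) - μ)

/-- Optimal hypothesis-testing tradeoff function: minimal type-II error over
randomized tests with type-I error at most `α`. -/
noncomputable def tradeoff {Ω : Type*} [MeasurableSpace Ω] (P Q : Measure Ω) (α : ℝ) : ℝ :=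
  sInf { b : ℝ | ∃ φ : Ω → ℝ, Measurable φ ∧ (∀ ω, φ ω ∈ Set.Icc (0:ℝ) 1) ∧
    (∫ ω, φ ω ∂P) ≤ α ∧ b = 1 - ∫ ω, φ ω ∂Q }

/-- Rényi divergence of order `a > 1`. -/
noncomputable def renyiDiv {Ω : Type*} [MeasurableSpace Ω] (a : ℝ) (P Q : Measure Ω) : ℝ :=
  (a - 1)⁻¹ * Real.log (∫ ω, ((Measure.rnDeriv P Q ω).toReal) ^ a ∂Q)

/-- `(ε,δ)`-differential privacy. -/
def IsDP {X Ω : Type*} [MeasurableSpace Ω] (M : X → Measure Ω) (Neighbor : X → X → Prop)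
    (ε δ : ℝ) : Prop :=
  ∀ x x', Neighbor x x' → ∀ S : Set Ω, MeasurableSet S →
    ((M x) S).toReal ≤ Real.exp ε * ((M x') S).toReal + δ

/-- `ρ`-zero-concentrated differential privacy. -/
def IsZCDP {X Ω : Type*} [MeasurableSpace Ω] (M : X → Measure Ω) (Neighbor : X → X → Prop)
    (ρ : ℝ) : Prop :=
  ∀ x x', Neighbor x x' → ∀ a : ℝ, 1 < a → renyiDiv a (M x) (M x') ≤ ρ * a

/-- `μ`-Gaussian differential privacy. -/
def IsGDP {X Ω : Type*} [MeasurableSpace Ω] (M : X → Measure Ω) (Neighbor : X → X → Prop)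
    (μ : ℝ) : Prop :=
  ∀ x x', Neighbor x x' → ∀ α ∈ Set.Icc (0:ℝ) 1, Gmu μ α ≤ tradeoff (M x) (M x') α

/-! ### Auxiliary lemmas -/

section Aux

lemma Phi_integral (x : ℝ) : Phi x = ∫ u in Iic x, gaussianPDFReal 0 1 u := by
  rw [Phi, gaussianReal_apply_eq_integral 0 one_ne_zero,
    ENNReal.toReal_ofReal (integral_nonneg fun _ => gaussianPDFReal_nonneg _ _ _)]

lemma Phi_nonneg (x : ℝ) : 0 ≤ Phi x := ENNReal.toReal_nonneg

lemma Phi_mono : Monotone Phi := fun a b h =>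
  ENNReal.toReal_mono (measure_ne_top _ _) (measure_mono (Iic_subset_Iic.2 h))

lemma Phi_continuous : Continuous Phi := by
  have h : Phi = fun x => Phi 0 + ∫ u in (0:ℝ)..x, gaussianPDFReal 0 1 u := by
    ext x
    rw [Phi_integral, Phi_integral, ← intervalIntegral.integral_Iic_sub_Iic
      (integrable_gaussianPDFReal 0 1).integrableOn (integrable_gaussianPDFReal 0 1).integrableOn]
    ring
  rw [h]
  exact continuous_const.add (intervalIntegral.continuous_primitive
    (fun a b => (integrable_gaussianPDFReal 0 1).intervalIntegrable) 0)

lemma Phi_tendsto_atTop : Filter.Tendsto Phi Filter.atTop (nhds 1) := by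
  have h := tendsto_measure_Iic_atTop (gaussianReal 0 1)
  rw [measure_univ] at h
  have := (ENNReal.tendsto_toReal ENNReal.one_ne_top).comp h
  exact (by simpa [Function.comp_def] using this :
    Filter.Tendsto (fun x => ((gaussianReal 0 1) (Iic x)).toReal) Filter.atTop (nhds 1))

lemma pdf_even (x : ℝ) : gaussianPDFReal 0 1 (-x) = gaussianPDFReal 0 1 x := by
  simp [gaussianPDFReal, neg_sq]

lemma Phi_symm (x : ℝ) : Phi (-x) = 1 - Phi x := by
  have h1 : Phi (-x) = ∫ u in Ioi x, gaussianPDFReal 0 1 u := by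
    rw [Phi_integral, ← integral_comp_neg_Ioi]
    exact integral_congr_ae (ae_of_all _ fun u => pdf_even u)
  have h2 : Phi x + Phi (-x) = 1 := by
    rw [Phi_integral, h1, intervalIntegral.integral_Iic_add_Ioi
      (integrable_gaussianPDFReal 0 1).integrableOn
      (integrable_gaussianPDFReal 0 1).integrableOn]
    exact integral_gaussianPDFReal_eq_one 0 one_ne_zero
  linarith

lemma Phi_tendsto_atBot : Filter.Tendsto Phi Filter.atBot (nhds 0) := by
  have h : Phi = fun x => 1 - Phi (-x) := by
    ext x; have := Phi_symm x; linarith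
  rw [h]
  have h2 : Filter.Tendsto (fun x : ℝ => Phi (-x)) Filter.atBot (nhds 1) :=
    Phi_tendsto_atTop.comp Filter.tendsto_neg_atBot_atTop
  simpa using (tendsto_const_nhds (x := (1:ℝ))).sub h2

lemma exists_Phi_eq {p : ℝ} (hp : p ∈ Ioo (0:ℝ) 1) : ∃ x, Phi x = p := by
  obtain ⟨a, ha⟩ := (Phi_tendsto_atBot.eventually_lt_const hp.1).exists
  obtain ⟨b, hb⟩ := (Phi_tendsto_atTop.eventually_const_lt hp.2).exists
  have hab : a ≤ max a b := le_max_left a b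
  have hb' : p < Phi (max a b) := lt_of_lt_of_le hb (Phi_mono (le_max_right a b))
  have := intermediate_value_Icc hab Phi_continuous.continuousOn
    (mem_Icc.2 ⟨ha.le, hb'.le⟩)
  obtain ⟨c, _, hc⟩ := this
  exact ⟨c, hc⟩

lemma exists_Phi_lt {p : ℝ} (hp : 0 < p) : ∃ a, Phi a < p :=
  (Phi_tendsto_atBot.eventually_lt_const hp).exists

lemma Phi_PhiInv {p : ℝ} (hp : p ∈ Ioo (0:ℝ) 1) : Phi (PhiInv p) = p := by
  obtain ⟨x₀, hx₀⟩ := exists_Phi_eq hp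
  obtain ⟨a, ha⟩ := exists_Phi_lt hp.1
  have hx₀S : x₀ ∈ {x : ℝ | p ≤ Phi x} := le_of_eq hx₀.symm
  have hbdd : BddBelow {x : ℝ | p ≤ Phi x} := by
    refine ⟨a, fun x hx => ?_⟩
    by_contra h
    exact absurd (le_trans hx (Phi_mono (le_of_not_ge h))) (not_le.2 ha)
  have hclosed : IsClosed {x : ℝ | p ≤ Phi x} := isClosed_le continuous_const Phi_continuous
  have hmem := hclosed.csInf_mem ⟨x₀, hx₀S⟩ hbdd
  have h1 : p ≤ Phi (PhiInv p) := hmem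
  have h2 : Phi (PhiInv p) ≤ p := by
    have := Phi_mono (csInf_le hbdd hx₀S)
    rwa [hx₀] at this
  linarith

end Aux

section Aux2
open scoped NNReal ENNReal

lemma sq_toNNReal_ne_zero {σ : ℝ} (hσ : 0 < σ) : (σ^2).toNNReal ≠ 0 := by
  simp only [ne_eq, Real.toNNReal_eq_zero, not_le]
  positivity

lemma coe_sq_toNNReal {σ : ℝ} (hσ : 0 < σ) : (((σ^2).toNNReal : ℝ≥0) : ℝ) = σ^2 :=
  Real.coe_toNNReal _ (by positivity)

lemma gaussianReal_eq_map (m σ : ℝ) (hσ : 0 < σ) :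
    gaussianReal m ((σ^2).toNNReal) = (gaussianReal 0 1).map (fun x => σ * x + m) := by
  have h2 := Measure.map_map (μ := gaussianReal 0 1) (g := (· + m)) (f := (σ * ·))
    (measurable_add_const m) (measurable_const_mul σ)
  rw [gaussianReal_map_const_mul σ, gaussianReal_map_add_const m] at h2
  have h3 : ((· + m) ∘ (σ * ·)) = (fun x : ℝ => σ * x + m) := rfl
  rw [h3] at h2
  rw [← h2]
  congr 1
  · ring
  · ext
    simp [coe_sq_toNNReal hσ]

lemma gauss_Iic (m σ s : ℝ) (hσ : 0 < σ) :
    ((gaussianReal m ((σ^2).toNNReal)) (Iic s)).toReal = Phi ((s - m)/σ) := by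
  rw [gaussianReal_eq_map m σ hσ, Measure.map_apply (by fun_prop) measurableSet_Iic]
  rw [Phi]
  congr 2
  ext x
  simp only [mem_preimage, mem_Iic]
  rw [le_div_iff₀ hσ]
  constructor <;> intro h <;> nlinarith

lemma neg_map_gauss (m : ℝ) (v : ℝ≥0) :
    (gaussianReal m v).map (fun x => -x) = gaussianReal (-m) v := by
  have h1 : (fun x : ℝ => -x) = ((-1 : ℝ) * ·) := by ext x; ring
  rw [h1, gaussianReal_map_const_mul (-1)]
  congr 1
  · ring
  · have : (⟨(-1:ℝ)^2, sq_nonneg _⟩ : ℝ≥0) = 1 := by ext; norm_num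
    ext; simp

lemma integral_gauss (m : ℝ) {v : ℝ≥0} (hv : v ≠ 0) (g : ℝ → ℝ) :
    ∫ ω, g ω ∂(gaussianReal m v) = ∫ ω, g ω * gaussianPDFReal m v ω := by
  rw [gaussianReal_of_var_ne_zero _ hv]
  have h1 : gaussianPDF m v = fun x => (((gaussianPDFReal m v x).toNNReal : ℝ≥0) : ℝ≥0∞) := rfl
  rw [h1, integral_withDensity_eq_integral_smul (measurable_gaussianPDFReal m v).real_toNNReal g]
  congr 1
  ext x
  rw [NNReal.smul_def, smul_eq_mul, Real.coe_toNNReal _ (gaussianPDFReal_nonneg m v x), mul_comm]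

lemma bdd_int (m : ℝ) (v : ℝ≥0) (g : ℝ → ℝ) (hmeas : Measurable g)
    (hb : ∀ x, g x ∈ Icc (0:ℝ) 1) :
    Integrable (fun ω => g ω * gaussianPDFReal m v ω) volume :=
  (integrable_gaussianPDFReal m v).bdd_mul (c := 1) hmeas.aestronglyMeasurable
    (ae_of_all _ fun x => by rw [Real.norm_eq_abs, abs_of_nonneg (hb x).1]; exact (hb x).2)

lemma bdd_int_prob {Ω : Type*} [MeasurableSpace Ω] (P : Measure Ω) [IsProbabilityMeasure P]
    (g : Ω → ℝ) (hmeas : Measurable g) (hb : ∀ x, g x ∈ Icc (0:ℝ) 1) :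
    Integrable g P :=
  (integrable_const (1:ℝ)).mono' hmeas.aestronglyMeasurable
    (ae_of_all _ fun x => by rw [Real.norm_eq_abs, abs_of_nonneg (hb x).1]; exact (hb x).2)

/-- Gaussian Chernoff tail bound. -/
lemma Phi_neg_le {t : ℝ} (ht : 0 ≤ t) : Phi (-t) ≤ Real.exp (-t^2/2) := by
  have key : ∀ x ∈ Iic (-t), gaussianPDFReal 0 1 x ≤
      Real.exp (-t^2/2) * gaussianPDFReal (-t) 1 x := by
    intro x hx
    simp only [mem_Iic] at hx
    simp only [gaussianPDFReal, NNReal.coe_one]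
    have hK : (0:ℝ) ≤ (√(2 * π * 1))⁻¹ := by positivity
    have heq : rexp (-t^2/2) * ((√(2 * π * 1))⁻¹ * rexp (-(x - -t)^2/(2*1))) =
        (√(2 * π * 1))⁻¹ * rexp (-t^2/2 + -(x - -t)^2/(2*1)) := by
      rw [Real.exp_add]; ring
    rw [heq]
    refine mul_le_mul_of_nonneg_left (Real.exp_le_exp.2 ?_) hK
    have hxt : t * (x + t) ≤ 0 := mul_nonpos_of_nonneg_of_nonpos ht (by linarith)
    nlinarith
  have h1 : Phi (-t) ≤ ∫ x in Iic (-t), Real.exp (-t^2/2) * gaussianPDFReal (-t) 1 x := by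
    rw [Phi_integral]
    exact setIntegral_mono_on (integrable_gaussianPDFReal 0 1).integrableOn
      (((integrable_gaussianPDFReal (-t) 1).const_mul _).integrableOn) measurableSet_Iic key
  have h2 : ∫ x in Iic (-t), Real.exp (-t^2/2) * gaussianPDFReal (-t) 1 x ≤
      ∫ x, Real.exp (-t^2/2) * gaussianPDFReal (-t) 1 x := by
    refine setIntegral_le_integral ((integrable_gaussianPDFReal (-t) 1).const_mul _)
      (ae_of_all _ fun x => ?_)
    have := gaussianPDFReal_nonneg (-t) 1 x
    positivity
  have h3 : ∫ x, Real.exp (-t^2/2) * gaussianPDFReal (-t) 1 x = Real.exp (-t^2/2) := by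
    rw [integral_const_mul, integral_gaussianPDFReal_eq_one _ one_ne_zero, mul_one]
  linarith

end Aux2

section NP
open scoped NNReal ENNReal

lemma np_main (m m' σ : ℝ) (hσ : 0 < σ) (hmm : m' ≤ m) {α : ℝ} (hα : α ∈ Ioo (0:ℝ) 1)
    (φ : ℝ → ℝ) (hφm : Measurable φ) (hφr : ∀ ω, φ ω ∈ Icc (0:ℝ) 1)
    (hφα : ∫ ω, φ ω ∂(gaussianReal m ((σ^2).toNNReal)) ≤ α) :
    Phi (PhiInv (1 - α) - (m - m')/σ)
      ≤ 1 - ∫ ω, φ ω ∂(gaussianReal m' ((σ^2).toNNReal)) := by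
  set v := (σ^2).toNNReal with hvdef
  have hv : v ≠ 0 := sq_toNNReal_ne_zero hσ
  have hV : ((v:ℝ≥0):ℝ) = σ^2 := coe_sq_toNNReal hσ
  have hVpos : (0:ℝ) < (v:ℝ) := by rw [hV]; positivity
  set t := PhiInv (1 - α) with htdef
  set s := m - σ * t with hsdef
  set p := gaussianPDFReal m v with hpdef
  set q := gaussianPDFReal m' v with hqdef
  have hp_pos : ∀ ω, 0 < p ω := fun ω => gaussianPDFReal_pos _ _ _ hv
  have hq_pos : ∀ ω, 0 < q ω := fun ω => gaussianPDFReal_pos _ _ _ hv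
  set c := q s / p s with hcdef
  have hc : 0 ≤ c := div_nonneg (hq_pos s).le (hp_pos s).le
  set ψ := (Iic s).indicator (fun _ : ℝ => (1:ℝ)) with hψdef
  have hψm : Measurable ψ := measurable_const.indicator measurableSet_Iic
  have hψr : ∀ ω, ψ ω ∈ Icc (0:ℝ) 1 := by
    intro ω
    by_cases h : ω ∈ Iic s <;> simp [hψdef, indicator, h]
  -- cross-product inequality for the monotone likelihood ratio
  have cross : ∀ ω₁ ω₂ : ℝ, ω₁ ≤ ω₂ → q ω₂ * p ω₁ ≤ q ω₁ * p ω₂ := by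
    intro ω₁ ω₂ hω
    simp only [hqdef, hpdef, gaussianPDFReal]
    have e1 : ∀ A B : ℝ, (√(2 * π * (v:ℝ)))⁻¹ * rexp A * ((√(2 * π * (v:ℝ)))⁻¹ * rexp B)
        = ((√(2 * π * (v:ℝ)))⁻¹)^2 * rexp (A + B) := by
      intro A B; rw [Real.exp_add]; ring
    rw [e1, e1]
    refine mul_le_mul_of_nonneg_left (Real.exp_le_exp.2 ?_) (by positivity)
    rw [← add_div, ← add_div,
      div_le_div_iff_of_pos_right (by positivity : (0:ℝ) < 2 * (v:ℝ))]
    nlinarith [mul_nonneg (sub_nonneg.2 hω) (sub_nonneg.2 hmm)]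
  have key : ∀ ω, 0 ≤ (ψ ω - φ ω) * (q ω - c * p ω) := by
    intro ω
    rcases le_or_gt ω s with h | h
    · have h1 : ψ ω = 1 := by simp [hψdef, indicator, h]
      have h2 : c * p ω ≤ q ω := by
        rw [hcdef, div_mul_eq_mul_div, div_le_iff₀ (hp_pos s)]
        exact cross ω s h
      have := (hφr ω).2
      exact mul_nonneg (by rw [h1]; linarith) (by linarith)
    · have h1 : ψ ω = 0 := by simp [hψdef, indicator, h.not_ge]
      have h2 : q ω ≤ c * p ω := by
        rw [hcdef, div_mul_eq_mul_div, le_div_iff₀ (hp_pos s)]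
        exact cross s ω h.le
      have h3 := (hφr ω).1
      have h4 : ψ ω - φ ω ≤ 0 := by rw [h1]; linarith
      nlinarith [mul_nonneg (neg_nonneg.2 h4) (neg_nonneg.2 (by linarith : q ω - c * p ω ≤ 0))]
  -- integrability
  have intφp := bdd_int m v φ hφm hφr
  have intφq := bdd_int m' v φ hφm hφr
  have intψp := bdd_int m v ψ hψm hψr
  have intψq := bdd_int m' v ψ hψm hψr
  have expand : (fun ω => (ψ ω - φ ω) * (q ω - c * p ω)) =
      fun ω => ((ψ ω * q ω - φ ω * q ω) - c * (ψ ω * p ω)) + c * (φ ω * p ω) := by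
    ext ω; ring
  have int_ineq : 0 ≤ ((∫ ω, ψ ω * q ω) - ∫ ω, φ ω * q ω) - c * (∫ ω, ψ ω * p ω)
      + c * (∫ ω, φ ω * p ω) := by
    have h0 : 0 ≤ ∫ ω, (ψ ω - φ ω) * (q ω - c * p ω) := integral_nonneg key
    rw [expand] at h0
    have I3 : Integrable (fun ω => ψ ω * q ω - φ ω * q ω) volume := intψq.sub intφq
    have I4 : Integrable (fun ω => c * (ψ ω * p ω)) volume := intψp.const_mul c
    have I1 : Integrable (fun ω => ψ ω * q ω - φ ω * q ω - c * (ψ ω * p ω)) volume := I3.sub I4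
    have I2 : Integrable (fun ω => c * (φ ω * p ω)) volume := intφp.const_mul c
    rwa [integral_add I1 I2, integral_sub I3 I4,
      integral_sub intψq intφq, integral_const_mul, integral_const_mul] at h0
  -- identification of the integrals
  have hψint : ∀ mm : ℝ, ∫ ω, ψ ω * gaussianPDFReal mm v ω = Phi ((s - mm)/σ) := by
    intro mm
    have h1 : (fun ω => ψ ω * gaussianPDFReal mm v ω)
        = (Iic s).indicator (gaussianPDFReal mm v) := by
      ext ω; by_cases h : ω ∈ Iic s <;> simp [hψdef, indicator, h]
    rw [h1, integral_indicator measurableSet_Iic]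
    have h2 := gauss_Iic mm σ s hσ
    rw [← hvdef, gaussianReal_apply_eq_integral _ hv,
      ENNReal.toReal_ofReal (integral_nonneg fun _ => gaussianPDFReal_nonneg _ _ _)] at h2
    exact h2
  have h1α : (1 - α) ∈ Ioo (0:ℝ) 1 := ⟨by linarith [hα.2], by linarith [hα.1]⟩
  have hψp : ∫ ω, ψ ω * p ω = α := by
    rw [hpdef, hψint m]
    have hs : (s - m)/σ = -t := by rw [hsdef]; field_simp; ring
    rw [hs, Phi_symm, Phi_PhiInv h1α]
    ring
  have hψq : ∫ ω, ψ ω * q ω = Phi ((m - m')/σ - t) := by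
    rw [hqdef, hψint m']
    congr 1
    rw [hsdef]
    field_simp
    ring
  have hφp : ∫ ω, φ ω * p ω = ∫ ω, φ ω ∂(gaussianReal m v) := (integral_gauss m hv φ).symm
  have hφq : ∫ ω, φ ω * q ω = ∫ ω, φ ω ∂(gaussianReal m' v) := (integral_gauss m' hv φ).symm
  rw [hψp, hψq, hφp, hφq] at int_ineq
  have h5 : ∫ ω, φ ω ∂(gaussianReal m' v) ≤ Phi ((m - m')/σ - t) := by
    nlinarith [mul_nonneg hc (sub_nonneg.2 hφα)]
  have h6 : Phi (t - (m - m')/σ) = 1 - Phi ((m - m')/σ - t) := by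
    rw [← Phi_symm]
    congr 1
    ring
  linarith

end NP

/-- The classical zCDP→DP conversion is conservative relative to the exact
Gaussian curve: a Gaussian mechanism satisfying `ρ`-zCDP is `√(2ρ)`-GDP, and
the exact `δ` of a `√(2ρ)`-GDP mechanism at `ε = ρ + 2√(ρ log(1/δ))` is at
most `δ`. -/
theorem zcdp_conversion_conservative {X : Type*} (f : X → ℝ)
    (Neighbor : X → X → Prop) (σ Δ ρ δ : ℝ)
    (hσ : 0 < σ) (hρ : 0 < ρ) (hδ : δ ∈ Set.Ioo (0:ℝ) 1)
    (hΔ : ∀ x x', Neighbor x x' → |f x - f x'| ≤ Δ)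
    (hρdef : Δ ^ 2 / (2 * σ ^ 2) = ρ)
    (M : X → Measure ℝ)
    (hM : ∀ x, M x = gaussianReal (f x) ((σ ^ 2).toNNReal)) :
    IsGDP M Neighbor (Real.sqrt (2 * ρ)) ∧
    Phi (-(ρ + 2 * Real.sqrt (ρ * Real.log (1 / δ))) / Real.sqrt (2 * ρ)
          + Real.sqrt (2 * ρ) / 2)
      - Real.exp (ρ + 2 * Real.sqrt (ρ * Real.log (1 / δ)))
        * Phi (-(ρ + 2 * Real.sqrt (ρ * Real.log (1 / δ))) / Real.sqrt (2 * ρ)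
          - Real.sqrt (2 * ρ) / 2) ≤ δ := by
  constructor
  · -- GDP part
    intro x x' hN α hα
    have hv : ((σ^2).toNNReal) ≠ 0 := sq_toNNReal_ne_zero hσ
    have hΔ0 : 0 ≤ Δ := le_trans (abs_nonneg _) (hΔ x x' hN)
    have hΔeq : Δ = Real.sqrt (2*ρ) * σ := by
      have h1 : Δ^2 = 2*σ^2*ρ := by field_simp at hρdef; linarith
      rw [← Real.sqrt_sq hΔ0, h1, show 2*σ^2*ρ = (2*ρ)*σ^2 by ring,
        Real.sqrt_mul (by positivity), Real.sqrt_sq hσ.le]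
    have hμ0 : |f x - f x'| / σ ≤ Real.sqrt (2*ρ) := by
      rw [div_le_iff₀ hσ]
      exact le_trans (hΔ x x' hN) (le_of_eq hΔeq)
    rw [hM x, hM x', tradeoff]
    refine le_csInf ⟨1 - ∫ ω, (fun _ => α) ω ∂(gaussianReal (f x') ((σ^2).toNNReal)),
      fun _ => α, measurable_const, fun _ => hα, by simp, rfl⟩ ?_
    intro b hb
    obtain ⟨φ, hφm, hφr, hφα, rfl⟩ := hb
    by_cases h0 : α ≤ 0
    · simp only [Gmu, if_pos h0]
      have hα0 : α = 0 := le_antisymm h0 hα.1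
      have hint : Integrable φ (gaussianReal (f x) ((σ^2).toNNReal)) :=
        bdd_int_prob _ φ hφm hφr
      have h1 : ∫ ω, φ ω ∂(gaussianReal (f x) ((σ^2).toNNReal)) = 0 :=
        le_antisymm (hα0 ▸ hφα) (integral_nonneg fun ω => (hφr ω).1)
      have h2 : φ =ᵐ[gaussianReal (f x) ((σ^2).toNNReal)] 0 :=
        (integral_eq_zero_iff_of_nonneg (fun ω => (hφr ω).1) hint).1 h1
      have h3 : φ =ᵐ[(volume : Measure ℝ)] 0 :=
        (gaussianReal_absolutelyContinuous' (f x) hv).ae_eq h2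
      have h4 : φ =ᵐ[gaussianReal (f x') ((σ^2).toNNReal)] 0 :=
        (gaussianReal_absolutelyContinuous (f x') hv).ae_eq h3
      have h5 : ∫ ω, φ ω ∂(gaussianReal (f x') ((σ^2).toNNReal)) = 0 := by
        rw [integral_congr_ae h4]; simp
      rw [h5]
      norm_num
    · by_cases h1 : 1 ≤ α
      · simp only [Gmu, if_neg h0, if_pos h1]
        have h2 : ∫ ω, φ ω ∂(gaussianReal (f x') ((σ^2).toNNReal)) ≤ 1 := by
          calc ∫ ω, φ ω ∂(gaussianReal (f x') ((σ^2).toNNReal))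
              ≤ ∫ _, (1:ℝ) ∂(gaussianReal (f x') ((σ^2).toNNReal)) :=
                integral_mono (bdd_int_prob _ φ hφm hφr) (integrable_const 1)
                  (fun ω => (hφr ω).2)
            _ = 1 := by simp
        linarith
      · have hαIoo : α ∈ Ioo (0:ℝ) 1 := ⟨not_le.1 h0, not_le.1 h1⟩
        simp only [Gmu, if_neg h0, if_neg h1]
        rcases le_or_gt (f x') (f x) with hord | hord
        · refine le_trans (Phi_mono ?_) (np_main (f x) (f x') σ hσ hord hαIoo φ hφm hφr hφα)
          have h2 : (f x - f x')/σ ≤ Real.sqrt (2*ρ) :=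
            le_trans (by gcongr; exact le_abs_self _) hμ0
          linarith
        · set φ' := fun ω => φ (-ω) with hφ'def
          have hφ'm : Measurable φ' := hφm.comp measurable_neg
          have hφ'r : ∀ ω, φ' ω ∈ Icc (0:ℝ) 1 := fun ω => hφr _
          have htrans : ∀ mm : ℝ, ∫ ω, φ' ω ∂(gaussianReal (-mm) ((σ^2).toNNReal))
              = ∫ ω, φ ω ∂(gaussianReal mm ((σ^2).toNNReal)) := by
            intro mm
            rw [← neg_map_gauss mm ((σ^2).toNNReal),
              integral_map measurable_neg.aemeasurable hφ'm.aestronglyMeasurable]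
            simp [hφ'def]
          have np := np_main (-f x) (-f x') σ hσ (by linarith) hαIoo φ' hφ'm hφ'r
            (by rw [htrans]; exact hφα)
          rw [htrans] at np
          refine le_trans (Phi_mono ?_) np
          have h2 : (-f x - -f x')/σ ≤ Real.sqrt (2*ρ) := by
            refine le_trans ?_ hμ0
            gcongr
            rw [abs_sub_comm]
            have := le_abs_self (f x' - f x)
            linarith
          linarith
  · -- exact delta bound
    set L := Real.log (1/δ) with hLdef
    have hL : 0 < L := Real.log_pos (one_lt_one_div hδ.1 hδ.2)
    have h2ρ : (0:ℝ) < Real.sqrt (2*ρ) := Real.sqrt_pos.2 (by linarith)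
    have e1 : ρ / Real.sqrt (2*ρ) = Real.sqrt (2*ρ)/2 := by
      rw [div_eq_div_iff h2ρ.ne' two_ne_zero, Real.mul_self_sqrt (by linarith)]
      ring
    have e2 : 2 * Real.sqrt (ρ*L) / Real.sqrt (2*ρ) = Real.sqrt (2*L) := by
      rw [div_eq_iff h2ρ.ne', ← Real.sqrt_mul (by positivity : (0:ℝ) ≤ 2*L),
        show (2*L)*(2*ρ) = 4*(ρ*L) by ring,
        Real.sqrt_mul (by norm_num : (0:ℝ) ≤ 4),
        show Real.sqrt (4:ℝ) = 2 by
          rw [show (4:ℝ) = 2^2 by norm_num, Real.sqrt_sq (by norm_num)]]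
    have hsum : (ρ + 2 * Real.sqrt (ρ*L)) / Real.sqrt (2*ρ)
        = Real.sqrt (2*ρ)/2 + Real.sqrt (2*L) := by
      rw [add_div, e1, e2]
    have harg : -(ρ + 2 * Real.sqrt (ρ*L)) / Real.sqrt (2*ρ) + Real.sqrt (2*ρ)/2
        = -Real.sqrt (2*L) := by
      rw [neg_div, hsum]; ring
    rw [harg]
    have hPhi2 : 0 ≤ Real.exp (ρ + 2 * Real.sqrt (ρ*L)) *
        Phi (-(ρ + 2 * Real.sqrt (ρ*L)) / Real.sqrt (2*ρ) - Real.sqrt (2*ρ)/2) :=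
      mul_nonneg (Real.exp_nonneg _) (Phi_nonneg _)
    have htail : Phi (-Real.sqrt (2*L)) ≤ δ := by
      have h1 := Phi_neg_le (t := Real.sqrt (2*L)) (Real.sqrt_nonneg _)
      rw [Real.sq_sqrt (by linarith : (0:ℝ) ≤ 2*L)] at h1
      have h2 : Real.exp (-(2*L)/2) = δ := by
        rw [show -(2*L)/2 = -L by ring, hLdef, Real.exp_neg,
          Real.exp_log (one_div_pos.2 hδ.1), one_div, inv_inv]
      linarith
    linarith
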